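/- arXiv:2303.11609 — 2 statements merged into one kernel-verified Lean document; each statement's English description precedes it below -/
import Mathlib

section
/- There exists a constant C>0, depending only on L, such that for every positive integer N (with h=L/N) and every cell-centered grid function phi on Omega=(0,L)^3 with zero mean, i.e. sum_{i,j,k=1}^{N} phi_{i,j,k}=0, one has ||phi||_2 <= C*||grad_h phi||_2. -/
open Finset

noncomputable section

/-! Finite–difference / MAC-grid framework on Ω = (0,L)³ with N cells per
direction and mesh size h = L/N.  A cell-centered grid function is a map
`ℤ → ℤ → ℤ → ℝ` whose meaningful values are at indices in {1,…,N}³; ghost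
values are given by the discrete homogeneous Neumann (reflection) condition,
implemented by clamping indices to {1,…,N}.  The x-component of a MAC vector
field is recorded so that `ux i j k` is the value at the x-face (i+1/2,j,k),
0 ≤ i ≤ N, 1 ≤ j,k ≤ N (analogously for the y,z components), and the
free-slip condition prescribes the tangential ghost values by reflection,
again implemented by clamping the tangential indices. -/

/-- Index clamped into `{1,…,N}`: implements the reflection ghost values. -/
def clampIdx (N : ℕ) (i : ℤ) : ℤ := max 1 (min i (N : ℤ))

/-- Extension of a cell-centered grid function by the discrete homogeneous
Neumann (reflection) ghost values. -/
def nExt (N : ℕ) (φ : ℤ → ℤ → ℤ → ℝ) (i j k : ℤ) : ℝ :=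
  φ (clampIdx N i) (clampIdx N j) (clampIdx N k)

/-- The cell indices `{1,…,N}`. -/
def cellIdx (N : ℕ) : Finset ℤ := Finset.Icc 1 (N : ℤ)

/-- The interior-face indices `{1,…,N-1}`. -/
def faceIdx (N : ℕ) : Finset ℤ := Finset.Icc 1 ((N : ℤ) - 1)

/-- Cell-centered discrete inner product `(φ,ψ) = h³ Σ φψ`. -/
def cip (N : ℕ) (h : ℝ) (φ ψ : ℤ → ℤ → ℤ → ℝ) : ℝ :=
  h ^ 3 * ∑ i ∈ cellIdx N, ∑ j ∈ cellIdx N, ∑ k ∈ cellIdx N, φ i j k * ψ i j k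

/-- Zero discrete mean: `Σ_{i,j,k=1}^N φ_{ijk} = 0`. -/
def zeroMean (N : ℕ) (φ : ℤ → ℤ → ℤ → ℝ) : Prop :=
  ∑ i ∈ cellIdx N, ∑ j ∈ cellIdx N, ∑ k ∈ cellIdx N, φ i j k = 0

/-- Two cell-centered functions agree on all cells. -/
def CellEqOn (N : ℕ) (φ ψ : ℤ → ℤ → ℤ → ℝ) : Prop :=
  ∀ i ∈ cellIdx N, ∀ j ∈ cellIdx N, ∀ k ∈ cellIdx N, φ i j k = ψ i j k

/-- Discrete maximum norm over the cells. -/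
def cInf (N : ℕ) (φ : ℤ → ℤ → ℤ → ℝ) : ℝ :=
  sSup {r : ℝ | ∃ i ∈ cellIdx N, ∃ j ∈ cellIdx N, ∃ k ∈ cellIdx N, r = |φ i j k|}

/-- `D_x φ` at the x-face `(i+1/2,j,k)` (recorded at index `(i,j,k)`);
it vanishes at the boundary faces `i = 0, N` by the Neumann ghost values. -/
def Dx (N : ℕ) (h : ℝ) (φ : ℤ → ℤ → ℤ → ℝ) (i j k : ℤ) : ℝ :=
  (nExt N φ (i + 1) j k - nExt N φ i j k) / h

/-- `D_y φ` at the y-face `(i,j+1/2,k)`. -/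
def Dy (N : ℕ) (h : ℝ) (φ : ℤ → ℤ → ℤ → ℝ) (i j k : ℤ) : ℝ :=
  (nExt N φ i (j + 1) k - nExt N φ i j k) / h

/-- `D_z φ` at the z-face `(i,j,k+1/2)`. -/
def Dz (N : ℕ) (h : ℝ) (φ : ℤ → ℤ → ℤ → ℝ) (i j k : ℤ) : ℝ :=
  (nExt N φ i j (k + 1) - nExt N φ i j k) / h

/-- Cell-centered discrete Laplacian, using the Neumann ghost values. -/
def lapC (N : ℕ) (h : ℝ) (φ : ℤ → ℤ → ℤ → ℝ) (i j k : ℤ) : ℝ :=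
  (nExt N φ (i + 1) j k + nExt N φ (i - 1) j k + nExt N φ i (j + 1) k +
      nExt N φ i (j - 1) k + nExt N φ i j (k + 1) + nExt N φ i j (k - 1) -
      6 * nExt N φ i j k) / h ^ 2

/-- `‖∇_h φ‖₂²`: sum of squared differences over all interior faces. -/
def gradSq (N : ℕ) (h : ℝ) (φ : ℤ → ℤ → ℤ → ℝ) : ℝ :=
  h ^ 3 *
    ((∑ i ∈ faceIdx N, ∑ j ∈ cellIdx N, ∑ k ∈ cellIdx N, Dx N h φ i j k ^ 2) +
      (∑ i ∈ cellIdx N, ∑ j ∈ faceIdx N, ∑ k ∈ cellIdx N, Dy N h φ i j k ^ 2) +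
      (∑ i ∈ cellIdx N, ∑ j ∈ cellIdx N, ∑ k ∈ faceIdx N, Dz N h φ i j k ^ 2))

/-- Face inner product `[f,g]_x`. -/
def ipFX (N : ℕ) (h : ℝ) (f g : ℤ → ℤ → ℤ → ℝ) : ℝ :=
  h ^ 3 / 2 * ∑ i ∈ cellIdx N, ∑ j ∈ cellIdx N, ∑ k ∈ cellIdx N,
    (f i j k * g i j k + f (i - 1) j k * g (i - 1) j k)

/-- Face inner product `[f,g]_y`. -/
def ipFY (N : ℕ) (h : ℝ) (f g : ℤ → ℤ → ℤ → ℝ) : ℝ :=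
  h ^ 3 / 2 * ∑ i ∈ cellIdx N, ∑ j ∈ cellIdx N, ∑ k ∈ cellIdx N,
    (f i j k * g i j k + f i (j - 1) k * g i (j - 1) k)

/-- Face inner product `[f,g]_z`. -/
def ipFZ (N : ℕ) (h : ℝ) (f g : ℤ → ℤ → ℤ → ℝ) : ℝ :=
  h ^ 3 / 2 * ∑ i ∈ cellIdx N, ∑ j ∈ cellIdx N, ∑ k ∈ cellIdx N,
    (f i j k * g i j k + f i j (k - 1) * g i j (k - 1))

/-- MAC inner product of two vector fields. -/
def macIP (N : ℕ) (h : ℝ) (ux uy uz vx vy vz : ℤ → ℤ → ℤ → ℝ) : ℝ :=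
  ipFX N h ux vx + ipFY N h uy vy + ipFZ N h uz vz

/-- Discrete divergence at the cell `(i,j,k)`. -/
def divH (h : ℝ) (ux uy uz : ℤ → ℤ → ℤ → ℝ) (i j k : ℤ) : ℝ :=
  (ux i j k - ux (i - 1) j k + uy i j k - uy i (j - 1) k +
    uz i j k - uz i j (k - 1)) / h

/-- No-penetration boundary condition: the normal boundary face values vanish. -/
def NoPen (N : ℕ) (ux uy uz : ℤ → ℤ → ℤ → ℝ) : Prop :=
  (∀ j ∈ cellIdx N, ∀ k ∈ cellIdx N, ux 0 j k = 0 ∧ ux (N : ℤ) j k = 0) ∧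
  (∀ i ∈ cellIdx N, ∀ k ∈ cellIdx N, uy i 0 k = 0 ∧ uy i (N : ℤ) k = 0) ∧
  (∀ i ∈ cellIdx N, ∀ j ∈ cellIdx N, uz i j 0 = 0 ∧ uz i j (N : ℤ) = 0)

/-- Free-slip (reflection) extension of the x-face component in the
tangential directions. -/
def fExtX (N : ℕ) (f : ℤ → ℤ → ℤ → ℝ) (i j k : ℤ) : ℝ :=
  f i (clampIdx N j) (clampIdx N k)

/-- Free-slip extension of the y-face component. -/
def fExtY (N : ℕ) (f : ℤ → ℤ → ℤ → ℝ) (i j k : ℤ) : ℝ :=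
  f (clampIdx N i) j (clampIdx N k)

/-- Free-slip extension of the z-face component. -/
def fExtZ (N : ℕ) (f : ℤ → ℤ → ℤ → ℝ) (i j k : ℤ) : ℝ :=
  f (clampIdx N i) (clampIdx N j) k

/-- Face-centered discrete Laplacian of the x-component (seven-point stencil,
free-slip ghost values in the tangential directions). -/
def lapFX (N : ℕ) (h : ℝ) (f : ℤ → ℤ → ℤ → ℝ) (i j k : ℤ) : ℝ :=
  (fExtX N f (i + 1) j k + fExtX N f (i - 1) j k + fExtX N f i (j + 1) k +
      fExtX N f i (j - 1) k + fExtX N f i j (k + 1) + fExtX N f i j (k - 1) -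
      6 * fExtX N f i j k) / h ^ 2

/-- Face-centered discrete Laplacian of the y-component. -/
def lapFY (N : ℕ) (h : ℝ) (f : ℤ → ℤ → ℤ → ℝ) (i j k : ℤ) : ℝ :=
  (fExtY N f (i + 1) j k + fExtY N f (i - 1) j k + fExtY N f i (j + 1) k +
      fExtY N f i (j - 1) k + fExtY N f i j (k + 1) + fExtY N f i j (k - 1) -
      6 * fExtY N f i j k) / h ^ 2

/-- Face-centered discrete Laplacian of the z-component. -/
def lapFZ (N : ℕ) (h : ℝ) (f : ℤ → ℤ → ℤ → ℝ) (i j k : ℤ) : ℝ :=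
  (fExtZ N f (i + 1) j k + fExtZ N f (i - 1) j k + fExtZ N f i (j + 1) k +
      fExtZ N f i (j - 1) k + fExtZ N f i j (k + 1) + fExtZ N f i j (k - 1) -
      6 * fExtZ N f i j k) / h ^ 2

/-- Face average `A_x φ` at the x-face `(i+1/2,j,k)`. -/
def AxF (N : ℕ) (φ : ℤ → ℤ → ℤ → ℝ) (i j k : ℤ) : ℝ :=
  (nExt N φ (i + 1) j k + nExt N φ i j k) / 2

/-- Face average `A_y φ`. -/
def AyF (N : ℕ) (φ : ℤ → ℤ → ℤ → ℝ) (i j k : ℤ) : ℝ :=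
  (nExt N φ i (j + 1) k + nExt N φ i j k) / 2

/-- Face average `A_z φ`. -/
def AzF (N : ℕ) (φ : ℤ → ℤ → ℤ → ℝ) (i j k : ℤ) : ℝ :=
  (nExt N φ i j (k + 1) + nExt N φ i j k) / 2

private lemma clampIdx_of_mem {N : ℕ} {i : ℤ} (h : i ∈ cellIdx N) : clampIdx N i = i := by
  simp only [cellIdx, Finset.mem_Icc] at h
  simp only [clampIdx]
  omega

private lemma telescope_sum (f : ℤ → ℝ) (a : ℤ) :
    ∀ b, a ≤ b → ∑ i ∈ Finset.Icc a (b - 1), (f (i + 1) - f i) = f b - f a := by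
  refine Int.le_induction ?_ ?_
  · rw [Finset.Icc_eq_empty (by omega)]; simp
  · intro b hb ih
    have hnb : b ∉ Finset.Icc a (b - 1) := by simp
    have hset : Finset.Icc a (b + 1 - 1) = insert b (Finset.Icc a (b - 1)) := by
      ext x; simp only [Finset.mem_Icc, Finset.mem_insert]; omega
    rw [hset, Finset.sum_insert hnb, ih]; ring

private lemma oneD_le (N : ℕ) (f : ℤ → ℝ) {a b : ℤ}
    (ha : a ∈ cellIdx N) (hb : b ∈ cellIdx N) (hab : a ≤ b) :
    (f b - f a) ^ 2 ≤ (N : ℝ) * ∑ i ∈ faceIdx N, (f (i + 1) - f i) ^ 2 := by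
  simp only [cellIdx, Finset.mem_Icc] at ha hb
  rw [← telescope_sum f a b hab]
  have hsub : Finset.Icc a (b - 1) ⊆ faceIdx N :=
    Finset.Icc_subset_Icc (by omega) (by omega)
  have hcard : ((Finset.Icc a (b - 1)).card : ℝ) ≤ (N : ℝ) := by
    have : (Finset.Icc a (b - 1)).card ≤ N := by
      rw [Int.card_Icc]; omega
    exact_mod_cast this
  calc (∑ i ∈ Finset.Icc a (b - 1), (f (i + 1) - f i)) ^ 2
      ≤ (Finset.Icc a (b - 1)).card * ∑ i ∈ Finset.Icc a (b - 1), (f (i + 1) - f i) ^ 2 :=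
        sq_sum_le_card_mul_sum_sq
    _ ≤ (N : ℝ) * ∑ i ∈ faceIdx N, (f (i + 1) - f i) ^ 2 :=
        mul_le_mul hcard
          (Finset.sum_le_sum_of_subset_of_nonneg hsub fun i _ _ => sq_nonneg _)
          (Finset.sum_nonneg fun i _ => sq_nonneg _) (Nat.cast_nonneg N)

private lemma oneD (N : ℕ) (f : ℤ → ℝ) {a b : ℤ}
    (ha : a ∈ cellIdx N) (hb : b ∈ cellIdx N) :
    (f a - f b) ^ 2 ≤ (N : ℝ) * ∑ i ∈ faceIdx N, (f (i + 1) - f i) ^ 2 := by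
  rcases le_total a b with hle | hle
  · rw [show f a - f b = -(f b - f a) by ring, neg_sq]
    exact oneD_le N f ha hb hle
  · exact oneD_le N f hb ha hle

private lemma double_sum {α : Type*} (Q : Finset α) (F : α → ℝ) :
    ∑ p ∈ Q, ∑ q ∈ Q, (F p - F q) ^ 2
      = 2 * Q.card * (∑ p ∈ Q, F p ^ 2) - 2 * (∑ p ∈ Q, F p) ^ 2 := by
  have h1 : ∀ p : α, ∑ q ∈ Q, (F p - F q) ^ 2
      = Q.card * F p ^ 2 - 2 * F p * (∑ q ∈ Q, F q) + ∑ q ∈ Q, F q ^ 2 := by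
    intro p
    have hb : ∀ q ∈ Q, (F p - F q) ^ 2 = F p ^ 2 - 2 * F p * F q + F q ^ 2 :=
      fun q _ => by ring
    rw [Finset.sum_congr rfl hb, Finset.sum_add_distrib, Finset.sum_sub_distrib,
        Finset.sum_const, ← Finset.mul_sum, nsmul_eq_mul]
  rw [Finset.sum_congr rfl fun p _ => h1 p, Finset.sum_add_distrib, Finset.sum_sub_distrib,
      Finset.sum_const, nsmul_eq_mul, ← Finset.mul_sum]
  have : ∑ p ∈ Q, 2 * F p * (∑ q ∈ Q, F q) = 2 * (∑ p ∈ Q, F p) ^ 2 := by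
    rw [← Finset.sum_mul]
    rw [← Finset.mul_sum]
    ring
  rw [this]; ring

private def TXs (N : ℕ) (g : ℤ → ℤ → ℤ → ℝ) (j k : ℤ) : ℝ :=
  ∑ i ∈ faceIdx N, (g (i + 1) j k - g i j k) ^ 2
private def TYs (N : ℕ) (g : ℤ → ℤ → ℤ → ℝ) (i k : ℤ) : ℝ :=
  ∑ j ∈ faceIdx N, (g i (j + 1) k - g i j k) ^ 2
private def TZs (N : ℕ) (g : ℤ → ℤ → ℤ → ℝ) (i j : ℤ) : ℝ :=
  ∑ k ∈ faceIdx N, (g i j (k + 1) - g i j k) ^ 2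

private lemma pointwise (N : ℕ) (g : ℤ → ℤ → ℤ → ℝ) {p q : ℤ × ℤ × ℤ}
    (hp1 : p.1 ∈ cellIdx N) (hp2 : p.2.1 ∈ cellIdx N) (hp3 : p.2.2 ∈ cellIdx N)
    (hq1 : q.1 ∈ cellIdx N) (hq2 : q.2.1 ∈ cellIdx N) (hq3 : q.2.2 ∈ cellIdx N) :
    (g p.1 p.2.1 p.2.2 - g q.1 q.2.1 q.2.2) ^ 2
      ≤ 3 * (N : ℝ) * (TXs N g p.2.1 p.2.2 + TYs N g q.1 p.2.2 + TZs N g q.1 q.2.1) := by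
  have hA : (g p.1 p.2.1 p.2.2 - g q.1 p.2.1 p.2.2) ^ 2 ≤ (N : ℝ) * TXs N g p.2.1 p.2.2 :=
    oneD N (fun i => g i p.2.1 p.2.2) hp1 hq1
  have hB : (g q.1 p.2.1 p.2.2 - g q.1 q.2.1 p.2.2) ^ 2 ≤ (N : ℝ) * TYs N g q.1 p.2.2 :=
    oneD N (fun j => g q.1 j p.2.2) hp2 hq2
  have hC : (g q.1 q.2.1 p.2.2 - g q.1 q.2.1 q.2.2) ^ 2 ≤ (N : ℝ) * TZs N g q.1 q.2.1 :=
    oneD N (fun k => g q.1 q.2.1 k) hp3 hq3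
  nlinarith [hA, hB, hC,
    sq_nonneg ((g p.1 p.2.1 p.2.2 - g q.1 p.2.1 p.2.2) - (g q.1 p.2.1 p.2.2 - g q.1 q.2.1 p.2.2)),
    sq_nonneg ((g q.1 p.2.1 p.2.2 - g q.1 q.2.1 p.2.2) - (g q.1 q.2.1 p.2.2 - g q.1 q.2.1 q.2.2)),
    sq_nonneg ((g p.1 p.2.1 p.2.2 - g q.1 p.2.1 p.2.2) - (g q.1 q.2.1 p.2.2 - g q.1 q.2.1 q.2.2))]

private lemma expandQ (c : Finset ℤ) (G : ℤ × ℤ × ℤ → ℝ) :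
    ∑ p ∈ c ×ˢ c ×ˢ c, G p = ∑ i ∈ c, ∑ j ∈ c, ∑ k ∈ c, G (i, j, k) := by
  simp [Finset.sum_product]

private lemma memQ {c : Finset ℤ} {p : ℤ × ℤ × ℤ} (hp : p ∈ c ×ˢ c ×ˢ c) :
    p.1 ∈ c ∧ p.2.1 ∈ c ∧ p.2.2 ∈ c := by
  simp only [Finset.mem_product] at hp
  exact ⟨hp.1, hp.2.1, hp.2.2⟩

private lemma collapseX (c : Finset ℤ) (T : ℤ → ℤ → ℝ) :
    ∑ p ∈ c ×ˢ c ×ˢ c, ∑ _q ∈ c ×ˢ c ×ˢ c, T p.2.1 p.2.2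
      = (c.card : ℝ) ^ 4 * ∑ j ∈ c, ∑ k ∈ c, T j k := by
  simp only [expandQ, Finset.sum_const, nsmul_eq_mul, ← Finset.mul_sum]
  push_cast [Finset.card_product]
  ring

private lemma collapseY (c : Finset ℤ) (T : ℤ → ℤ → ℝ) :
    ∑ p ∈ c ×ˢ c ×ˢ c, ∑ q ∈ c ×ˢ c ×ˢ c, T q.1 p.2.2
      = (c.card : ℝ) ^ 4 * ∑ i ∈ c, ∑ k ∈ c, T i k := by
  simp only [expandQ, Finset.sum_const, nsmul_eq_mul, ← Finset.mul_sum]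
  rw [Finset.sum_comm]
  ring

private lemma collapseZ (c : Finset ℤ) (T : ℤ → ℤ → ℝ) :
    ∑ _p ∈ c ×ˢ c ×ˢ c, ∑ q ∈ c ×ˢ c ×ˢ c, T q.1 q.2.1
      = (c.card : ℝ) ^ 4 * ∑ i ∈ c, ∑ j ∈ c, T i j := by
  simp only [expandQ, Finset.sum_const, nsmul_eq_mul, ← Finset.mul_sum]
  push_cast [Finset.card_product]
  ring

private lemma core (N : ℕ) (hN : 0 < N) (g : ℤ → ℤ → ℤ → ℝ)
    (hmean : ∑ i ∈ cellIdx N, ∑ j ∈ cellIdx N, ∑ k ∈ cellIdx N, g i j k = 0) :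
    ∑ i ∈ cellIdx N, ∑ j ∈ cellIdx N, ∑ k ∈ cellIdx N, g i j k ^ 2
      ≤ 3 * (N : ℝ) ^ 2 *
        ((∑ j ∈ cellIdx N, ∑ k ∈ cellIdx N, TXs N g j k) +
         (∑ i ∈ cellIdx N, ∑ k ∈ cellIdx N, TYs N g i k) +
         (∑ i ∈ cellIdx N, ∑ j ∈ cellIdx N, TZs N g i j)) := by
  have hN' : (0 : ℝ) < (N : ℝ) := by exact_mod_cast hN
  have hcard : ((cellIdx N).card : ℝ) = (N : ℝ) := by
    rw [show cellIdx N = Finset.Icc 1 (N : ℤ) from rfl, Int.card_Icc]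
    simp
  have hQ := double_sum ((cellIdx N) ×ˢ (cellIdx N) ×ˢ (cellIdx N))
      (fun p => g p.1 p.2.1 p.2.2)
  have hsum0 : ∑ p ∈ (cellIdx N) ×ˢ (cellIdx N) ×ˢ (cellIdx N), g p.1 p.2.1 p.2.2 = 0 := by
    rw [expandQ]; exact hmean
  have hsumsq : ∑ p ∈ (cellIdx N) ×ˢ (cellIdx N) ×ˢ (cellIdx N), g p.1 p.2.1 p.2.2 ^ 2
      = ∑ i ∈ cellIdx N, ∑ j ∈ cellIdx N, ∑ k ∈ cellIdx N, g i j k ^ 2 := by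
    rw [expandQ]
  have hcardQ : ((((cellIdx N) ×ˢ (cellIdx N) ×ˢ (cellIdx N)).card : ℕ) : ℝ) = (N : ℝ) ^ 3 := by
    push_cast [Finset.card_product, hcard]
    ring
  rw [hsum0, hsumsq, hcardQ] at hQ
  have hbound : ∑ p ∈ (cellIdx N) ×ˢ (cellIdx N) ×ˢ (cellIdx N),
      ∑ q ∈ (cellIdx N) ×ˢ (cellIdx N) ×ˢ (cellIdx N),
        (g p.1 p.2.1 p.2.2 - g q.1 q.2.1 q.2.2) ^ 2
      ≤ 3 * (N : ℝ) ^ 5 *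
        ((∑ j ∈ cellIdx N, ∑ k ∈ cellIdx N, TXs N g j k) +
         (∑ i ∈ cellIdx N, ∑ k ∈ cellIdx N, TYs N g i k) +
         (∑ i ∈ cellIdx N, ∑ j ∈ cellIdx N, TZs N g i j)) := by
    calc ∑ p ∈ (cellIdx N) ×ˢ (cellIdx N) ×ˢ (cellIdx N),
        ∑ q ∈ (cellIdx N) ×ˢ (cellIdx N) ×ˢ (cellIdx N),
          (g p.1 p.2.1 p.2.2 - g q.1 q.2.1 q.2.2) ^ 2
        ≤ ∑ p ∈ (cellIdx N) ×ˢ (cellIdx N) ×ˢ (cellIdx N),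
            ∑ q ∈ (cellIdx N) ×ˢ (cellIdx N) ×ˢ (cellIdx N),
              3 * (N : ℝ) * (TXs N g p.2.1 p.2.2 + TYs N g q.1 p.2.2 + TZs N g q.1 q.2.1) := by
          refine Finset.sum_le_sum fun p hp => Finset.sum_le_sum fun q hq => ?_
          obtain ⟨hp1, hp2, hp3⟩ := memQ hp
          obtain ⟨hq1, hq2, hq3⟩ := memQ hq
          exact pointwise N g hp1 hp2 hp3 hq1 hq2 hq3
      _ = 3 * (N : ℝ) *
          ((∑ p ∈ (cellIdx N) ×ˢ (cellIdx N) ×ˢ (cellIdx N),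
              ∑ _q ∈ (cellIdx N) ×ˢ (cellIdx N) ×ˢ (cellIdx N), TXs N g p.2.1 p.2.2) +
           (∑ p ∈ (cellIdx N) ×ˢ (cellIdx N) ×ˢ (cellIdx N),
              ∑ q ∈ (cellIdx N) ×ˢ (cellIdx N) ×ˢ (cellIdx N), TYs N g q.1 p.2.2) +
           (∑ _p ∈ (cellIdx N) ×ˢ (cellIdx N) ×ˢ (cellIdx N),
              ∑ q ∈ (cellIdx N) ×ˢ (cellIdx N) ×ˢ (cellIdx N), TZs N g q.1 q.2.1)) := by
          simp only [mul_add, Finset.sum_add_distrib, ← Finset.mul_sum]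
      _ = 3 * (N : ℝ) *
          (((cellIdx N).card : ℝ) ^ 4 * (∑ j ∈ cellIdx N, ∑ k ∈ cellIdx N, TXs N g j k) +
           ((cellIdx N).card : ℝ) ^ 4 * (∑ i ∈ cellIdx N, ∑ k ∈ cellIdx N, TYs N g i k) +
           ((cellIdx N).card : ℝ) ^ 4 * (∑ i ∈ cellIdx N, ∑ j ∈ cellIdx N, TZs N g i j)) := by
          rw [collapseX, collapseY, collapseZ]
      _ = _ := by rw [hcard]; ring
  rw [hQ] at hbound
  have hSnn : 0 ≤ (∑ j ∈ cellIdx N, ∑ k ∈ cellIdx N, TXs N g j k) +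
      (∑ i ∈ cellIdx N, ∑ k ∈ cellIdx N, TYs N g i k) +
      (∑ i ∈ cellIdx N, ∑ j ∈ cellIdx N, TZs N g i j) := by
    have h1 : 0 ≤ ∑ j ∈ cellIdx N, ∑ k ∈ cellIdx N, TXs N g j k :=
      Finset.sum_nonneg fun _ _ => Finset.sum_nonneg fun _ _ =>
        Finset.sum_nonneg fun _ _ => sq_nonneg _
    have h2 : 0 ≤ ∑ i ∈ cellIdx N, ∑ k ∈ cellIdx N, TYs N g i k :=
      Finset.sum_nonneg fun _ _ => Finset.sum_nonneg fun _ _ =>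
        Finset.sum_nonneg fun _ _ => sq_nonneg _
    have h3 : 0 ≤ ∑ i ∈ cellIdx N, ∑ j ∈ cellIdx N, TZs N g i j :=
      Finset.sum_nonneg fun _ _ => Finset.sum_nonneg fun _ _ =>
        Finset.sum_nonneg fun _ _ => sq_nonneg _
    linarith
  nlinarith [hbound, hSnn, hN', pow_pos hN' 3, pow_pos hN' 5,
    mul_nonneg (pow_nonneg hN'.le 5) hSnn, sq_nonneg ((N : ℝ))]

/-- discrete Poincaré inequality: there is a constant `C > 0`
depending only on `L` such that for every positive integer `N` (with `h = L/N`)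
and every zero-mean cell-centered grid function `φ` on `(0,L)³`,
`‖φ‖₂ ≤ C ‖∇_h φ‖₂`. -/
theorem discrete_poincare (L : ℝ) (hL : 0 < L) :
    ∃ C : ℝ, 0 < C ∧
      ∀ N : ℕ, 0 < N → ∀ φ : ℤ → ℤ → ℤ → ℝ, zeroMean N φ →
        Real.sqrt (cip N (L / N) φ φ) ≤ C * Real.sqrt (gradSq N (L / N) φ) := by
  refine ⟨2 * L, by positivity, ?_⟩
  intro N hN φ hmean
  have hN' : (0 : ℝ) < (N : ℝ) := by exact_mod_cast hN
  set h : ℝ := L / N with hdef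
  have hh : 0 < h := div_pos hL hN'
  have hext : ∀ i ∈ cellIdx N, ∀ j ∈ cellIdx N, ∀ k ∈ cellIdx N,
      nExt N φ i j k = φ i j k := by
    intro i hi j hj k hk
    rw [nExt, clampIdx_of_mem hi, clampIdx_of_mem hj, clampIdx_of_mem hk]
  have hmean' : ∑ i ∈ cellIdx N, ∑ j ∈ cellIdx N, ∑ k ∈ cellIdx N, nExt N φ i j k = 0 := by
    rw [Finset.sum_congr rfl fun i hi => Finset.sum_congr rfl fun j hj =>
      Finset.sum_congr rfl fun k hk => hext i hi j hj k hk]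
    exact hmean
  have hcore := core N hN (nExt N φ) hmean'
  -- cip = h^3 * P
  have hcip : cip N h φ φ
      = h ^ 3 * ∑ i ∈ cellIdx N, ∑ j ∈ cellIdx N, ∑ k ∈ cellIdx N, nExt N φ i j k ^ 2 := by
    rw [cip]
    congr 1
    refine Finset.sum_congr rfl fun i hi => Finset.sum_congr rfl fun j hj =>
      Finset.sum_congr rfl fun k hk => ?_
    rw [hext i hi j hj k hk, sq]
  -- gradSq = h * S
  have hx : ∑ i ∈ faceIdx N, ∑ j ∈ cellIdx N, ∑ k ∈ cellIdx N,
      (nExt N φ (i + 1) j k - nExt N φ i j k) ^ 2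
      = ∑ j ∈ cellIdx N, ∑ k ∈ cellIdx N, TXs N (nExt N φ) j k := by
    rw [Finset.sum_comm]
    exact Finset.sum_congr rfl fun j _ => Finset.sum_comm
  have hy : ∑ i ∈ cellIdx N, ∑ j ∈ faceIdx N, ∑ k ∈ cellIdx N,
      (nExt N φ i (j + 1) k - nExt N φ i j k) ^ 2
      = ∑ i ∈ cellIdx N, ∑ k ∈ cellIdx N, TYs N (nExt N φ) i k :=
    Finset.sum_congr rfl fun i _ => Finset.sum_comm
  have hz : ∑ i ∈ cellIdx N, ∑ j ∈ cellIdx N, ∑ k ∈ faceIdx N,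
      (nExt N φ i j (k + 1) - nExt N φ i j k) ^ 2
      = ∑ i ∈ cellIdx N, ∑ j ∈ cellIdx N, TZs N (nExt N φ) i j := rfl
  have hgrad : gradSq N h φ
      = h * ((∑ j ∈ cellIdx N, ∑ k ∈ cellIdx N, TXs N (nExt N φ) j k) +
             (∑ i ∈ cellIdx N, ∑ k ∈ cellIdx N, TYs N (nExt N φ) i k) +
             (∑ i ∈ cellIdx N, ∑ j ∈ cellIdx N, TZs N (nExt N φ) i j)) := by
    rw [gradSq]
    simp only [Dx, Dy, Dz, div_pow, ← Finset.sum_div]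
    rw [hx, hy, hz]
    field_simp
  have hSnn : 0 ≤ (∑ j ∈ cellIdx N, ∑ k ∈ cellIdx N, TXs N (nExt N φ) j k) +
      (∑ i ∈ cellIdx N, ∑ k ∈ cellIdx N, TYs N (nExt N φ) i k) +
      (∑ i ∈ cellIdx N, ∑ j ∈ cellIdx N, TZs N (nExt N φ) i j) := by
    have h1 : 0 ≤ ∑ j ∈ cellIdx N, ∑ k ∈ cellIdx N, TXs N (nExt N φ) j k :=
      Finset.sum_nonneg fun _ _ => Finset.sum_nonneg fun _ _ =>
        Finset.sum_nonneg fun _ _ => sq_nonneg _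
    have h2 : 0 ≤ ∑ i ∈ cellIdx N, ∑ k ∈ cellIdx N, TYs N (nExt N φ) i k :=
      Finset.sum_nonneg fun _ _ => Finset.sum_nonneg fun _ _ =>
        Finset.sum_nonneg fun _ _ => sq_nonneg _
    have h3 : 0 ≤ ∑ i ∈ cellIdx N, ∑ j ∈ cellIdx N, TZs N (nExt N φ) i j :=
      Finset.sum_nonneg fun _ _ => Finset.sum_nonneg fun _ _ =>
        Finset.sum_nonneg fun _ _ => sq_nonneg _
    linarith
  have hh2 : h ^ 2 * (N : ℝ) ^ 2 = L ^ 2 := by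
    rw [hdef]
    field_simp
  set S : ℝ := (∑ j ∈ cellIdx N, ∑ k ∈ cellIdx N, TXs N (nExt N φ) j k) +
      (∑ i ∈ cellIdx N, ∑ k ∈ cellIdx N, TYs N (nExt N φ) i k) +
      (∑ i ∈ cellIdx N, ∑ j ∈ cellIdx N, TZs N (nExt N φ) i j) with hSdef
  have final : cip N h φ φ ≤ (2 * L) ^ 2 * gradSq N h φ := by
    rw [hcip, hgrad]
    calc h ^ 3 * ∑ i ∈ cellIdx N, ∑ j ∈ cellIdx N, ∑ k ∈ cellIdx N, nExt N φ i j k ^ 2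
        ≤ h ^ 3 * (3 * (N : ℝ) ^ 2 * S) :=
          mul_le_mul_of_nonneg_left hcore (by positivity)
      _ = 3 * (h ^ 2 * (N : ℝ) ^ 2) * (h * S) := by ring
      _ = 3 * L ^ 2 * (h * S) := by rw [hh2]
      _ ≤ (2 * L) ^ 2 * (h * S) := by nlinarith [mul_nonneg hh.le hSnn, sq_nonneg L, hL]
  calc Real.sqrt (cip N h φ φ)
      ≤ Real.sqrt ((2 * L) ^ 2 * gradSq N h φ) := Real.sqrt_le_sqrt final
    _ = 2 * L * Real.sqrt (gradSq N h φ) := by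
        rw [Real.sqrt_mul (by positivity), Real.sqrt_sq (by positivity)]
end
end

section
/- There exists a constant C>0, depending only on L, such that for every positive integer N (with h=L/N) and every cell-centered grid function f on Omega=(0,L)^3 (with Neumann ghost values), the discrete Sobolev inequality ||f||_4 <= C*( ||f||_2^2 + ||grad_h f||_2^2 )^{1/2} holds. -/
open Finset

noncomputable section

/-- Discrete `ℓᵖ` norm of a cell-centered function. -/
def cNormP (N : ℕ) (h p : ℝ) (φ : ℤ → ℤ → ℤ → ℝ) : ℝ :=
  (h ^ 3 * ∑ i ∈ cellIdx N, ∑ j ∈ cellIdx N, ∑ k ∈ cellIdx N, |φ i j k| ^ p) ^ (1 / p)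

/-!
In one dimension, `a i ≤ mean a + Σ |Δa|` applied to `a²`, together with
`|Δ(a²)| = |a(l+1) + a l| |Δa|` and Cauchy–Schwarz, gives
`a i² ≤ N⁻¹ ‖a‖² + 2 ‖a‖ ‖Δa‖`. On a two-dimensional slice this bounds `u j k²` both by a
quantity `α k` and by `β j`, so `Σ u⁴ ≤ (Σ α)(Σ β)`: a discrete Ladyzhenskaya inequality
`Σ u⁴ ≤ 3 ‖u‖² (N⁻² ‖u‖² + ‖∇u‖²)`. The one-dimensional bound in the remaining direction,
summed over the slice, controls every slice mass `‖g i‖²` by the total mass and the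
`x`-differences. Multiplying by `h³` with `h = L / N` and using `2 h² √S √G ≤ h³ S + h G`
turns the product into `3 (1 + 1/L) (1 + 1/L²) (‖f‖₂² + ‖∇_h f‖₂²)²`.
-/

lemma nExt_of_mem {N : ℕ} {φ : ℤ → ℤ → ℤ → ℝ} {i j k : ℤ} (hi : i ∈ cellIdx N)
    (hj : j ∈ cellIdx N) (hk : k ∈ cellIdx N) : nExt N φ i j k = φ i j k := by
  simp only [cellIdx, mem_Icc] at hi hj hk
  simp only [nExt, clampIdx]
  congr <;> omega

lemma sum_cellIdx_nExt (N : ℕ) (φ : ℤ → ℤ → ℤ → ℝ) (F : ℝ → ℝ) :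
    ∑ i ∈ cellIdx N, ∑ j ∈ cellIdx N, ∑ k ∈ cellIdx N, F (nExt N φ i j k) =
      ∑ i ∈ cellIdx N, ∑ j ∈ cellIdx N, ∑ k ∈ cellIdx N, F (φ i j k) :=
  sum_congr rfl fun _ hi => sum_congr rfl fun _ hj => sum_congr rfl fun _ hk => by
    rw [nExt_of_mem hi hj hk]

lemma sum_sum_sum_comm {α β γ M : Type*} [AddCommMonoid M] (s : Finset α) (t : Finset β)
    (u : Finset γ) (F : α → β → γ → M) :
    ∑ x ∈ s, ∑ y ∈ t, ∑ z ∈ u, F x y z = ∑ z ∈ u, ∑ x ∈ s, ∑ y ∈ t, F x y z := by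
  calc ∑ x ∈ s, ∑ y ∈ t, ∑ z ∈ u, F x y z = ∑ x ∈ s, ∑ z ∈ u, ∑ y ∈ t, F x y z :=
        sum_congr rfl fun _ _ => sum_comm
    _ = _ := sum_comm

lemma abs_sub_le_sum_Ico (a : ℤ → ℝ) {m i : ℤ} (hmi : m ≤ i) :
    |a i - a m| ≤ ∑ l ∈ Ico m i, |a (l + 1) - a l| := by
  induction i, hmi using Int.leInduction with
  | base => simp
  | succ i hmi ih =>
    rw [← insert_Ico_right_eq_Ico_add_one hmi, sum_insert (by simp)]
    linarith [abs_sub_le (a (i + 1)) (a i) (a m)]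

lemma abs_sub_le_sum_faceIdx {N : ℕ} (a : ℤ → ℝ) {i m : ℤ} (hi : i ∈ cellIdx N)
    (hm : m ∈ cellIdx N) : |a i - a m| ≤ ∑ l ∈ faceIdx N, |a (l + 1) - a l| := by
  wlog hmi : m ≤ i generalizing i m
  · rw [abs_sub_comm]
    exact this hm hi (le_of_not_ge hmi)
  refine (abs_sub_le_sum_Ico a hmi).trans
    (sum_le_sum_of_subset_of_nonneg (fun l hl => ?_) fun _ _ _ => abs_nonneg _)
  simp only [cellIdx, faceIdx, mem_Icc, mem_Ico] at hi hm hl ⊢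
  omega

lemma le_average_add_variation {N : ℕ} (hN : 0 < N) (a : ℤ → ℝ) {i : ℤ}
    (hi : i ∈ cellIdx N) :
    a i ≤ (N : ℝ)⁻¹ * ∑ m ∈ cellIdx N, a m + ∑ l ∈ faceIdx N, |a (l + 1) - a l| := by
  set V := ∑ l ∈ faceIdx N, |a (l + 1) - a l|
  have hsum : (cellIdx N).card • (a i - V) ≤ ∑ m ∈ cellIdx N, a m :=
    card_nsmul_le_sum _ _ _ fun m hm => by
      linarith [(le_abs_self _).trans (abs_sub_le_sum_faceIdx a hi hm)]
  have hcard : (cellIdx N).card = N := by simp [cellIdx]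
  rw [hcard, nsmul_eq_mul] at hsum
  have hNR : (0 : ℝ) < N := by exact_mod_cast hN
  rw [inv_mul_eq_div]
  linarith [(le_div_iff₀ hNR).mpr (by linarith : (a i - V) * N ≤ ∑ m ∈ cellIdx N, a m)]

lemma sum_faceIdx_add_sq_le {N : ℕ} (a : ℤ → ℝ) :
    ∑ l ∈ faceIdx N, (a (l + 1) + a l) ^ 2 ≤ 4 * ∑ m ∈ cellIdx N, a m ^ 2 := by
  have hshift : ∑ l ∈ faceIdx N, a (l + 1) ^ 2 ≤ ∑ m ∈ cellIdx N, a m ^ 2 := by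
    rw [show ∑ l ∈ faceIdx N, a (l + 1) ^ 2 =
        ∑ m ∈ (faceIdx N).map (addRightEmbedding 1), a m ^ 2 from
          (sum_map (faceIdx N) (addRightEmbedding 1) fun m => a m ^ 2).symm]
    refine sum_le_sum_of_subset_of_nonneg (fun m hm => ?_) fun _ _ _ => sq_nonneg _
    simp only [faceIdx, cellIdx, mem_map, mem_Icc, addRightEmbedding_apply] at hm ⊢
    omega
  have hface : ∑ l ∈ faceIdx N, a l ^ 2 ≤ ∑ m ∈ cellIdx N, a m ^ 2 := by
    refine sum_le_sum_of_subset_of_nonneg (fun m hm => ?_) fun _ _ _ => sq_nonneg _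
    simp only [faceIdx, cellIdx, mem_Icc] at hm ⊢
    omega
  calc ∑ l ∈ faceIdx N, (a (l + 1) + a l) ^ 2
      ≤ ∑ l ∈ faceIdx N, (2 * a (l + 1) ^ 2 + 2 * a l ^ 2) :=
        sum_le_sum fun l _ => by nlinarith [sq_nonneg (a (l + 1) - a l)]
    _ ≤ 4 * ∑ m ∈ cellIdx N, a m ^ 2 := by
        rw [sum_add_distrib, ← mul_sum, ← mul_sum]
        linarith

def agmonBound (N : ℕ) (M G : ℝ) : ℝ := (N : ℝ)⁻¹ * M + 2 * √M * √G

lemma agmonBound_nonneg (N : ℕ) {M : ℝ} (G : ℝ) (hM : 0 ≤ M) : 0 ≤ agmonBound N M G := by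
  unfold agmonBound
  positivity

lemma sq_le_agmonBound {N : ℕ} (hN : 0 < N) (a : ℤ → ℝ) {i : ℤ} (hi : i ∈ cellIdx N) :
    a i ^ 2 ≤ agmonBound N (∑ m ∈ cellIdx N, a m ^ 2)
      (∑ l ∈ faceIdx N, (a (l + 1) - a l) ^ 2) := by
  have hvar : ∑ l ∈ faceIdx N, |a (l + 1) ^ 2 - a l ^ 2| ≤
      2 * √(∑ m ∈ cellIdx N, a m ^ 2) * √(∑ l ∈ faceIdx N, (a (l + 1) - a l) ^ 2) :=
    calc ∑ l ∈ faceIdx N, |a (l + 1) ^ 2 - a l ^ 2|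
        = ∑ l ∈ faceIdx N, |a (l + 1) + a l| * |a (l + 1) - a l| := by
          simp only [← abs_mul, ← sq_sub_sq]
      _ ≤ √(∑ l ∈ faceIdx N, (a (l + 1) + a l) ^ 2) *
            √(∑ l ∈ faceIdx N, (a (l + 1) - a l) ^ 2) := by
          simpa only [sq_abs] using Real.sum_mul_le_sqrt_mul_sqrt (faceIdx N)
            (fun l => |a (l + 1) + a l|) (fun l => |a (l + 1) - a l|)
      _ ≤ √(4 * ∑ m ∈ cellIdx N, a m ^ 2) *
            √(∑ l ∈ faceIdx N, (a (l + 1) - a l) ^ 2) := by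
          gcongr
          exact sum_faceIdx_add_sq_le a
      _ = _ := by
          rw [Real.sqrt_mul' _ (sum_nonneg fun _ _ => sq_nonneg _)]
          · rw [show (4 : ℝ) = 2 ^ 2 by norm_num, Real.sqrt_sq zero_le_two]
  have := le_average_add_variation hN (fun m => a m ^ 2) hi
  unfold agmonBound
  linarith

lemma sum_agmonBound_le (N : ℕ) {ι : Type*} (s : Finset ι) {M G : ι → ℝ}
    (hM : ∀ x, 0 ≤ M x) (hG : ∀ x, 0 ≤ G x) :
    ∑ x ∈ s, agmonBound N (M x) (G x) ≤ agmonBound N (∑ x ∈ s, M x) (∑ x ∈ s, G x) := by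
  have := Real.sum_sqrt_mul_sqrt_le s hM hG
  simp only [agmonBound, sum_add_distrib, ← mul_sum, mul_assoc]
  linarith

lemma agmonBound_mul_agmonBound_le (N : ℕ) {M G G' : ℝ} (hM : 0 ≤ M) (hG : 0 ≤ G)
    (hG' : 0 ≤ G') :
    agmonBound N M G * agmonBound N M G' ≤ 3 * M * ((N : ℝ)⁻¹ ^ 2 * M + G + G') := by
  unfold agmonBound
  have := Real.sq_sqrt hM
  have := Real.sq_sqrt hG
  have := Real.sq_sqrt hG'
  nlinarith [sq_nonneg ((N : ℝ)⁻¹ * M - √M * √G), sq_nonneg ((N : ℝ)⁻¹ * M - √M * √G'),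
    mul_nonneg hM (sq_nonneg (√G - √G')), Real.sqrt_nonneg M, Real.sqrt_nonneg G,
    Real.sqrt_nonneg G']

theorem sum_pow_four_le_two_dim {N : ℕ} (hN : 0 < N) (u : ℤ → ℤ → ℝ) :
    ∑ j ∈ cellIdx N, ∑ k ∈ cellIdx N, u j k ^ 4 ≤
      3 * (∑ j ∈ cellIdx N, ∑ k ∈ cellIdx N, u j k ^ 2) *
        ((N : ℝ)⁻¹ ^ 2 * ∑ j ∈ cellIdx N, ∑ k ∈ cellIdx N, u j k ^ 2 +
          ∑ j ∈ faceIdx N, ∑ k ∈ cellIdx N, (u (j + 1) k - u j k) ^ 2 +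
          ∑ j ∈ cellIdx N, ∑ k ∈ faceIdx N, (u j (k + 1) - u j k) ^ 2) := by
  set α : ℤ → ℝ := fun k => agmonBound N (∑ j ∈ cellIdx N, u j k ^ 2)
    (∑ j ∈ faceIdx N, (u (j + 1) k - u j k) ^ 2)
  set β : ℤ → ℝ := fun j => agmonBound N (∑ k ∈ cellIdx N, u j k ^ 2)
    (∑ k ∈ faceIdx N, (u j (k + 1) - u j k) ^ 2)
  have hα : ∑ k ∈ cellIdx N, α k ≤ agmonBound N (∑ j ∈ cellIdx N, ∑ k ∈ cellIdx N, u j k ^ 2)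
      (∑ j ∈ faceIdx N, ∑ k ∈ cellIdx N, (u (j + 1) k - u j k) ^ 2) := by
    refine (sum_agmonBound_le N _ (fun _ => by positivity) fun _ => by positivity).trans_eq ?_
    rw [sum_comm, sum_comm (s := faceIdx N)]
  have hβ : ∑ j ∈ cellIdx N, β j ≤ agmonBound N (∑ j ∈ cellIdx N, ∑ k ∈ cellIdx N, u j k ^ 2)
      (∑ j ∈ cellIdx N, ∑ k ∈ faceIdx N, (u j (k + 1) - u j k) ^ 2) :=
    sum_agmonBound_le N _ (fun _ => by positivity) fun _ => by positivity
  calc ∑ j ∈ cellIdx N, ∑ k ∈ cellIdx N, u j k ^ 4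
      = ∑ j ∈ cellIdx N, ∑ k ∈ cellIdx N, u j k ^ 2 * u j k ^ 2 := by simp only [← pow_add]
    _ ≤ ∑ j ∈ cellIdx N, ∑ k ∈ cellIdx N, α k * β j :=
        sum_le_sum fun j hj => sum_le_sum fun k hk =>
          mul_le_mul (sq_le_agmonBound hN (u · k) hj) (sq_le_agmonBound hN (u j) hk)
            (sq_nonneg _) (agmonBound_nonneg _ _ (by positivity))
    _ = (∑ k ∈ cellIdx N, α k) * ∑ j ∈ cellIdx N, β j := by
        rw [sum_mul_sum, sum_comm]
    _ ≤ _ := (mul_le_mul hα hβ (sum_nonneg fun _ _ => agmonBound_nonneg _ _ (by positivity))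
          (agmonBound_nonneg _ _ (by positivity))).trans
          (agmonBound_mul_agmonBound_le N (by positivity) (by positivity) (by positivity))

lemma sum_sq_slice_le_agmonBound {N : ℕ} (hN : 0 < N) (g : ℤ → ℤ → ℤ → ℝ) {i : ℤ}
    (hi : i ∈ cellIdx N) :
    ∑ j ∈ cellIdx N, ∑ k ∈ cellIdx N, g i j k ^ 2 ≤
      agmonBound N (∑ m ∈ cellIdx N, ∑ j ∈ cellIdx N, ∑ k ∈ cellIdx N, g m j k ^ 2)
        (∑ l ∈ faceIdx N, ∑ j ∈ cellIdx N, ∑ k ∈ cellIdx N, (g (l + 1) j k - g l j k) ^ 2) :=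
  calc ∑ j ∈ cellIdx N, ∑ k ∈ cellIdx N, g i j k ^ 2
      ≤ ∑ j ∈ cellIdx N, ∑ k ∈ cellIdx N, agmonBound N (∑ m ∈ cellIdx N, g m j k ^ 2)
          (∑ l ∈ faceIdx N, (g (l + 1) j k - g l j k) ^ 2) :=
        sum_le_sum fun j _ => sum_le_sum fun k _ => sq_le_agmonBound hN (g · j k) hi
    _ ≤ ∑ j ∈ cellIdx N, agmonBound N (∑ k ∈ cellIdx N, ∑ m ∈ cellIdx N, g m j k ^ 2)
          (∑ k ∈ cellIdx N, ∑ l ∈ faceIdx N, (g (l + 1) j k - g l j k) ^ 2) :=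
        sum_le_sum fun _ _ =>
          sum_agmonBound_le N _ (fun _ => by positivity) fun _ => by positivity
    _ ≤ _ := (sum_agmonBound_le N _ (fun _ => by positivity) fun _ => by positivity).trans_eq
          (by rw [sum_sum_sum_comm, sum_sum_sum_comm (cellIdx N) (cellIdx N) (faceIdx N)])

theorem sum_pow_four_le_three_dim {N : ℕ} (hN : 0 < N) (g : ℤ → ℤ → ℤ → ℝ) :
    ∑ i ∈ cellIdx N, ∑ j ∈ cellIdx N, ∑ k ∈ cellIdx N, g i j k ^ 4 ≤
      3 * agmonBound N (∑ i ∈ cellIdx N, ∑ j ∈ cellIdx N, ∑ k ∈ cellIdx N, g i j k ^ 2)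
          (∑ i ∈ faceIdx N, ∑ j ∈ cellIdx N, ∑ k ∈ cellIdx N, (g (i + 1) j k - g i j k) ^ 2) *
        ((N : ℝ)⁻¹ ^ 2 * ∑ i ∈ cellIdx N, ∑ j ∈ cellIdx N, ∑ k ∈ cellIdx N, g i j k ^ 2 +
          ∑ i ∈ cellIdx N, ∑ j ∈ faceIdx N, ∑ k ∈ cellIdx N, (g i (j + 1) k - g i j k) ^ 2 +
          ∑ i ∈ cellIdx N, ∑ j ∈ cellIdx N, ∑ k ∈ faceIdx N, (g i j (k + 1) - g i j k) ^ 2) := by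
  calc ∑ i ∈ cellIdx N, ∑ j ∈ cellIdx N, ∑ k ∈ cellIdx N, g i j k ^ 4
      ≤ ∑ i ∈ cellIdx N, 3 * agmonBound N
            (∑ i ∈ cellIdx N, ∑ j ∈ cellIdx N, ∑ k ∈ cellIdx N, g i j k ^ 2)
            (∑ i ∈ faceIdx N, ∑ j ∈ cellIdx N, ∑ k ∈ cellIdx N, (g (i + 1) j k - g i j k) ^ 2) *
          ((N : ℝ)⁻¹ ^ 2 * ∑ j ∈ cellIdx N, ∑ k ∈ cellIdx N, g i j k ^ 2 +
            ∑ j ∈ faceIdx N, ∑ k ∈ cellIdx N, (g i (j + 1) k - g i j k) ^ 2 +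
            ∑ j ∈ cellIdx N, ∑ k ∈ faceIdx N, (g i j (k + 1) - g i j k) ^ 2) :=
        sum_le_sum fun i hi => (sum_pow_four_le_two_dim hN (g i)).trans <| by
          gcongr
          exact sum_sq_slice_le_agmonBound hN g hi
    _ = _ := by rw [← mul_sum, sum_add_distrib, sum_add_distrib, ← mul_sum]

lemma mesh_scaling {L : ℝ} (hL : 0 < L) {N : ℕ} (hN : 0 < N) {S GX GY GZ : ℝ} (hS : 0 ≤ S)
    (hGX : 0 ≤ GX) (hGY : 0 ≤ GY) (hGZ : 0 ≤ GZ) :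
    (L / N) ^ 3 * (3 * agmonBound N S GX * ((N : ℝ)⁻¹ ^ 2 * S + GY + GZ)) ≤
      3 * (1 + 1 / L) * (1 + 1 / L ^ 2) * ((L / N) ^ 3 * S + L / N * (GX + GY + GZ)) ^ 2 := by
  set h := L / N with hh
  have hh0 : 0 < h := by positivity
  have hNinv : (N : ℝ)⁻¹ = h / L := by rw [hh]; field_simp
  set E := h ^ 3 * S + h * (GX + GY + GZ) with hE
  have hS3 : 0 ≤ h ^ 3 * S := by positivity
  have hX : 0 ≤ h * GX := by positivity
  have hY : 0 ≤ h * GY := by positivity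
  have hZ : 0 ≤ h * GZ := by positivity
  have hSE : h ^ 3 * S ≤ E := by linarith
  have hXE : h ^ 2 * agmonBound N S GX ≤ (1 + 1 / L) * E := by
    have hamgm : 2 * h ^ 2 * (√S * √GX) ≤ h ^ 3 * S + h * GX := by
      have hsq := mul_nonneg hh0.le (sq_nonneg (h * √S - √GX))
      have hexp : h * (h * √S - √GX) ^ 2 =
          h ^ 3 * √S ^ 2 - 2 * h ^ 2 * (√S * √GX) + h * √GX ^ 2 := by ring
      rw [Real.sq_sqrt hS, Real.sq_sqrt hGX] at hexp
      linarith
    have hdiv : h ^ 3 * S / L ≤ E / L := by gcongr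
    have hexpand :
        h ^ 2 * (h / L * S + 2 * √S * √GX) = h ^ 3 * S / L + 2 * h ^ 2 * (√S * √GX) := by
      ring
    rw [agmonBound, hNinv, hexpand, add_mul, one_mul, one_div_mul_eq_div]
    linarith
  have hYZE : h * ((N : ℝ)⁻¹ ^ 2 * S + GY + GZ) ≤ (1 + 1 / L ^ 2) * E := by
    have hdiv : h ^ 3 * S / L ^ 2 ≤ E / L ^ 2 := by gcongr
    have hexpand : h * ((h / L) ^ 2 * S + GY + GZ) = h ^ 3 * S / L ^ 2 + (h * GY + h * GZ) := by
      ring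
    rw [hNinv, hexpand, add_mul, one_mul, one_div_mul_eq_div]
    linarith
  calc h ^ 3 * (3 * agmonBound N S GX * ((N : ℝ)⁻¹ ^ 2 * S + GY + GZ))
      = 3 * (h ^ 2 * agmonBound N S GX) * (h * ((N : ℝ)⁻¹ ^ 2 * S + GY + GZ)) := by ring
    _ ≤ 3 * ((1 + 1 / L) * E) * ((1 + 1 / L ^ 2) * E) := by gcongr
    _ = _ := by ring

lemma cNormP_four_eq (N : ℕ) (h : ℝ) (f : ℤ → ℤ → ℤ → ℝ) :
    cNormP N h 4 f = (h ^ 3 * ∑ i ∈ cellIdx N, ∑ j ∈ cellIdx N, ∑ k ∈ cellIdx N,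
      nExt N f i j k ^ 4) ^ (1 / 4 : ℝ) := by
  have habs : ∀ x : ℝ, |x| ^ (4 : ℝ) = x ^ 4 := fun x => by
    rw [show (4 : ℝ) = (4 : ℕ) by norm_num, Real.rpow_natCast, Even.pow_abs ⟨2, rfl⟩]
  simp only [cNormP, habs]
  rw [sum_cellIdx_nExt N f (· ^ 4)]

lemma cip_self_eq (N : ℕ) (h : ℝ) (f : ℤ → ℤ → ℤ → ℝ) :
    cip N h f f =
      h ^ 3 * ∑ i ∈ cellIdx N, ∑ j ∈ cellIdx N, ∑ k ∈ cellIdx N, nExt N f i j k ^ 2 := by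
  rw [cip, sum_cellIdx_nExt N f (· ^ 2)]
  simp only [sq]

lemma gradSq_eq (N : ℕ) {h : ℝ} (hh : h ≠ 0) (f : ℤ → ℤ → ℤ → ℝ) :
    gradSq N h f = h *
      (∑ i ∈ faceIdx N, ∑ j ∈ cellIdx N, ∑ k ∈ cellIdx N,
          (nExt N f (i + 1) j k - nExt N f i j k) ^ 2 +
        ∑ i ∈ cellIdx N, ∑ j ∈ faceIdx N, ∑ k ∈ cellIdx N,
          (nExt N f i (j + 1) k - nExt N f i j k) ^ 2 +
        ∑ i ∈ cellIdx N, ∑ j ∈ cellIdx N, ∑ k ∈ faceIdx N,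
          (nExt N f i j (k + 1) - nExt N f i j k) ^ 2) := by
  simp only [gradSq, Dx, Dy, Dz, div_pow, ← sum_div]
  field_simp

/-- discrete Sobolev embedding: there is a constant `C > 0`
depending only on `L` such that for every positive integer `N` (with `h = L/N`)
and every cell-centered grid function `f` on `(0,L)³`,
`‖f‖₄ ≤ C (‖f‖₂² + ‖∇_h f‖₂²)^{1/2}`. -/
theorem discrete_sobolev (L : ℝ) (hL : 0 < L) :
    ∃ C : ℝ, 0 < C ∧
      ∀ N : ℕ, 0 < N → ∀ f : ℤ → ℤ → ℤ → ℝ,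
        cNormP N (L / N) 4 f ≤
          C * Real.sqrt (cip N (L / N) f f + gradSq N (L / N) f) := by
  set K := 3 * (1 + 1 / L) * (1 + 1 / L ^ 2)
  refine ⟨K ^ (1 / 4 : ℝ), by positivity, fun N hN f => ?_⟩
  have hh : L / N ≠ 0 := by positivity
  have hE : 0 ≤ cip N (L / N) f f + gradSq N (L / N) f := by
    rw [cip_self_eq, gradSq_eq N hh]
    positivity
  rw [cNormP_four_eq]
  calc _ ≤ (K * (cip N (L / N) f f + gradSq N (L / N) f) ^ 2) ^ (1 / 4 : ℝ) := by
        refine Real.rpow_le_rpow (by positivity) ?_ (by norm_num)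
        rw [cip_self_eq, gradSq_eq N hh]
        exact (mul_le_mul_of_nonneg_left (sum_pow_four_le_three_dim hN _) (by positivity)).trans
          (mesh_scaling hL hN (by positivity) (by positivity) (by positivity) (by positivity))
    _ = K ^ (1 / 4 : ℝ) * √(cip N (L / N) f f + gradSq N (L / N) f) := by
        rw [Real.mul_rpow (by positivity) (sq_nonneg _), ← Real.rpow_natCast,
          ← Real.rpow_mul hE, Real.sqrt_eq_rpow]
        norm_num
end
end
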